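/- Let (E, dist) be a metric space, let T : E → E be Lipschitz with constant γ where 0 ≤ γ < 1, let S ⊆ E, and let ε ≥ 0. Assume that for every Q ∈ S there exists Q' ∈ S with dist(T Q, Q') ≤ ε. Then for every natural number h ≥ 1 and every Q ∈ S there exists Q'' ∈ S with dist(T^[h] Q, Q'') ≤ ε / (1 − γ), where T^[h] denotes the h-fold iterate of T. In particular, if ε = 0 then for every h and every Q ∈ S there exists Q'' ∈ S with dist(T^[h] Q, Q'') = 0. -/
import Mathlib

/-- h-step approximation-closure bound, contraction case:
if `T` is γ-Lipschitz with `0 ≤ γ < 1` and every `Q ∈ S` has a one-step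
approximation in `S` within `ε`, then every `h ≥ 1`-fold Bellman iterate of
`Q ∈ S` has an approximation in `S` within `ε / (1 - γ)`. -/
theorem h_step_ibe_bound_contraction {E : Type*} [MetricSpace E] (T : E → E) (γ : ℝ)
    (hγ0 : 0 ≤ γ) (hγ1 : γ < 1)
    (hT : ∀ x y : E, dist (T x) (T y) ≤ γ * dist x y)
    (S : Set E) (ε : ℝ) (hε : 0 ≤ ε)
    (hclose : ∀ Q ∈ S, ∃ Q' ∈ S, dist (T Q) Q' ≤ ε) :
    (∀ h : ℕ, 1 ≤ h → ∀ Q ∈ S, ∃ Q'' ∈ S, dist (T^[h] Q) Q'' ≤ ε / (1 - γ)) ∧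
    (ε = 0 → ∀ h : ℕ, 1 ≤ h → ∀ Q ∈ S, ∃ Q'' ∈ S, dist (T^[h] Q) Q'' = 0) := by
  have hpos : 0 < 1 - γ := by linarith
  have key : ∀ h : ℕ, 1 ≤ h → ∀ Q ∈ S, ∃ Q'' ∈ S, dist (T^[h] Q) Q'' ≤ ε / (1 - γ) := by
    intro h
    induction h with
    | zero => intro habs; omega
    | succ n ih =>
      intro _ Q hQ
      rcases Nat.eq_zero_or_pos n with hn | hn
      · subst hn
        obtain ⟨Q', hQ', hd⟩ := hclose Q hQ
        refine ⟨Q', hQ', ?_⟩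
        rw [show T^[0+1] Q = T Q by simp]
        have : ε ≤ ε / (1 - γ) := by
          rw [le_div_iff₀ hpos]; nlinarith
        linarith
      · obtain ⟨Q'', hQ'', hd⟩ := ih hn Q hQ
        obtain ⟨Q3, hQ3, hd3⟩ := hclose Q'' hQ''
        refine ⟨Q3, hQ3, ?_⟩
        rw [Function.iterate_succ_apply']
        calc dist (T (T^[n] Q)) Q3 ≤ dist (T (T^[n] Q)) (T Q'') + dist (T Q'') Q3 :=
              dist_triangle _ _ _
          _ ≤ γ * (ε / (1 - γ)) + ε := by
              have := hT (T^[n] Q) Q''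
              have : dist (T (T^[n] Q)) (T Q'') ≤ γ * (ε / (1 - γ)) :=
                this.trans (by nlinarith [mul_le_mul_of_nonneg_left hd hγ0])
              linarith
          _ = ε / (1 - γ) := by field_simp; ring
  refine ⟨key, ?_⟩
  intro hε0 h hh Q hQ
  obtain ⟨Q'', hQ'', hd⟩ := key h hh Q hQ
  refine ⟨Q'', hQ'', le_antisymm ?_ dist_nonneg⟩
  simpa [hε0] using hd
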